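/- Let 𝔾 be a locally finite, connected, countably infinite graph with vertex set 𝕍 and edge set 𝔼. Then the source map ∂ : (ZMod 2)^𝔼 → (ZMod 2)^𝕍 is surjective; that is, for every subset U ⊆ 𝕍 there exists a set of edges of 𝔾 whose set of odd-degree vertices is exactly U. -/

import Mathlib

open MeasureTheory

noncomputable section

instance : MeasurableSpace (ZMod 2) := ⊤

/-- The source (mod-2 boundary) of a configuration on a set `E` of edges, at a vertex `v`:
the mod-2 number of open edges incident to `v`. -/
def srcAt {V : Type*} {E : Set (Sym2 V)} (ω : E → ZMod 2) (v : V) : ZMod 2 :=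
  (Set.ncard {e : E | ω e = 1 ∧ v ∈ (e : Sym2 V)} : ZMod 2)

/-- A configuration is even (sourceless). -/
def IsEvenConf {V : Type*} {E : Set (Sym2 V)} (ω : E → ZMod 2) : Prop :=
  ∀ v : V, srcAt ω v = 0

/-- `μ` is the uniform even subgraph measure (the Haar probability measure on the
group of even configurations): a probability measure supported on even configurations
and invariant under translation (symmetric difference) by every even configuration. -/
def IsUEG {V : Type*} (E : Set (Sym2 V)) (μ : Measure (E → ZMod 2)) : Prop :=
  IsProbabilityMeasure μ ∧ μ {ω | IsEvenConf ω} = 1 ∧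
    ∀ γ : E → ZMod 2, IsEvenConf γ → Measure.map (fun ω => ω + γ) μ = μ

/-- The graph of open edges of a configuration. -/
def openGraph {V : Type*} {E : Set (Sym2 V)} (ω : E → ZMod 2) : SimpleGraph V :=
  SimpleGraph.fromEdgeSet {e : Sym2 V | ∃ h : e ∈ E, ω ⟨e, h⟩ = 1}

/-- The connected component of `v` in the graph of open edges is infinite. -/
def PercolatesAt {V : Type*} {E : Set (Sym2 V)} (ω : E → ZMod 2) (v : V) : Prop :=
  {w : V | (openGraph ω).Reachable v w}.Infinite

/-- The hypercubic lattice `ℤ^d`. -/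
def latticeGraph (d : ℕ) : SimpleGraph (Fin d → ℤ) where
  Adj u v := ∑ i, |u i - v i| = 1
  symm := ⟨fun u v h => by simpa [abs_sub_comm] using h⟩
  loopless := ⟨fun u h => by simp at h⟩

/-!
The source map is continuous for the product topology, because every vertex meets only finitely
many edges, so its image is compact and hence closed. By connectivity the image contains
`δ_u - δ_w` for all vertices `u, w`. Any prescription of sources on finitely many vertices is then
realised by routing each prescribed source to a common vertex outside them, which exists since the
graph is infinite; so the image is also dense, hence everything.
-/

section SourceMap

variable {V : Type*} {E : Set (Sym2 V)}

theorem srcAt_eq_sum {v : V} (hv : {e : E | v ∈ (e : Sym2 V)}.Finite) (ω : E → ZMod 2) :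
    srcAt ω v = ∑ e ∈ hv.toFinset, ω e := by
  have hω : ∀ e, ω e = if ω e = 1 then 1 else 0 := fun e => by
    generalize ω e = x; revert x; decide
  rw [Finset.sum_congr rfl fun e _ => hω e, Finset.sum_boole, srcAt, ← Set.ncard_coe_finset]
  congr 2
  ext e
  simp [and_comm]

theorem continuous_srcAt {v : V} (hv : {e : E | v ∈ (e : Sym2 V)}.Finite) :
    Continuous fun ω : E → ZMod 2 => srcAt ω v := by
  simp_rw [srcAt_eq_sum hv]
  fun_prop

theorem srcAt_single [DecidableEq V] {v : V} (hv : {e : E | v ∈ (e : Sym2 V)}.Finite) (e : E) :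
    srcAt (Pi.single e 1) v = if v ∈ (e : Sym2 V) then 1 else 0 := by
  simp [srcAt_eq_sum hv, Finset.sum_pi_single']

variable (hE : ∀ v : V, {e : E | v ∈ (e : Sym2 V)}.Finite)

def sourceMap : (E → ZMod 2) →ₗ[ZMod 2] V → ZMod 2 where
  toFun ω v := srcAt ω v
  map_add' ω γ := by
    ext v
    simp [srcAt_eq_sum (hE v), Finset.sum_add_distrib]
  map_smul' c ω := by
    ext v
    simp [srcAt_eq_sum (hE v), Finset.mul_sum]

theorem sourceMap_single_mk [DecidableEq V] {u w : V} (huw : u ≠ w) (he : s(u, w) ∈ E) :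
    sourceMap hE (Pi.single ⟨s(u, w), he⟩ 1) = Pi.single u 1 - Pi.single w 1 := by
  ext v
  simp only [sourceMap, LinearMap.coe_mk, AddHom.coe_mk, srcAt_single (hE v), Sym2.mem_iff,
    Pi.sub_apply, Pi.single_apply]
  by_cases hvu : v = u <;> by_cases hvw : v = w <;> simp_all

theorem isClosed_range_sourceMap : IsClosed (Set.range (sourceMap hE)) :=
  (isCompact_range (continuous_pi fun v => continuous_srcAt (hE v))).isClosed

end SourceMap

theorem SimpleGraph.Reachable.sub_mem {V A : Type*} [AddGroup A] {G : SimpleGraph V}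
    (S : AddSubgroup A) (φ : V → A) (hadj : ∀ u w, G.Adj u w → φ u - φ w ∈ S) {u v : V}
    (h : G.Reachable u v) : φ u - φ v ∈ S := by
  obtain ⟨p⟩ := h
  induction p with
  | nil => simp
  | cons h _ ih => simpa using S.add_mem (hadj _ _ h) ih

theorem Submodule.dense_of_single_sub_single_mem {ι R : Type*} [Infinite ι] [DecidableEq ι]
    [Ring R] [TopologicalSpace R] (S : Submodule R (ι → R))
    (hS : ∀ i j, (Pi.single i 1 - Pi.single j 1 : ι → R) ∈ S) : Dense (S : Set (ι → R)) := by
  intro f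
  rw [mem_closure_iff_nhds]
  intro U hU
  rw [nhds_pi, Filter.mem_pi] at hU
  obtain ⟨I, hI, t, ht, hsub⟩ := hU
  obtain ⟨j, hj⟩ := hI.infinite_compl.nonempty
  set g : ι → R := ∑ i ∈ hI.toFinset, f i • (Pi.single i 1 - Pi.single j 1) with hg
  have hgf : ∀ x ∈ I, g x = f x := by
    intro x hx
    have hxj : x ≠ j := fun h => hj (h ▸ hx)
    simp [hg, Finset.sum_apply, Pi.single_apply, hxj, hx]
  refine ⟨g, hsub fun x hx => hgf x hx ▸ mem_of_mem_nhds (ht x), ?_⟩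
  exact S.sum_mem fun i _ => S.smul_mem _ (hS i j)

theorem source_map_surjective_general {V : Type} [Infinite V]
    (G : SimpleGraph V)
    (hlf : ∀ v : V, {e : Sym2 V | e ∈ G.edgeSet ∧ v ∈ e}.Finite)
    (hconn : G.Connected) :
    Function.Surjective (fun (ω : G.edgeSet → ZMod 2) (v : V) => srcAt ω v) := by
  classical
  have hE : ∀ v, {e : G.edgeSet | v ∈ (e : Sym2 V)}.Finite := fun v =>
    (hlf v).preimage Subtype.val_injective.injOn |>.subset fun e he => ⟨e.2, he⟩
  have hS : ∀ u w : V, Pi.single u 1 - Pi.single w 1 ∈ LinearMap.range (sourceMap hE) :=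
    fun u w => (hconn u w).sub_mem (LinearMap.range (sourceMap hE)).toAddSubgroup
      (fun v => Pi.single v 1) fun a b hab => ⟨_, sourceMap_single_mk hE hab.ne hab⟩
  change Function.Surjective (sourceMap hE)
  rw [← Set.range_eq_univ (f := sourceMap hE), ← (isClosed_range_sourceMap hE).closure_eq,
    ← dense_iff_closure_eq, ← LinearMap.coe_range]
  exact Submodule.dense_of_single_sub_single_mem _ hS

/-- For a locally finite, connected, countably infinite graph the source
map `∂ : (ZMod 2)^𝔼 → (ZMod 2)^𝕍` is surjective. -/
theorem source_map_surjective {V : Type} [Countable V] [Infinite V]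
    (G : SimpleGraph V)
    (hlf : ∀ v : V, {e : Sym2 V | e ∈ G.edgeSet ∧ v ∈ e}.Finite)
    (hconn : G.Connected) :
    Function.Surjective (fun (ω : G.edgeSet → ZMod 2) (v : V) => srcAt ω v) :=
  source_map_surjective_general G hlf hconn
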